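/- For integers n ≥ 1, -1 ≤ t ≤ n-1, and any integer t', the sum ∑_{s=0}^{n} (-1)^s C(n-t-1, s-t-1) C(n-s, t') equals (-1)^{t+1} δ_{t', n-t-1}. -/

import Mathlib

/-! Only the terms with `s ≥ t + 1` survive; shifting the index by `t + 1` turns the sum into
`(-1)^(t+1) ∑ₖ (-1)^k C(m,k) C(m-k,t')` with `m = n-t-1`. Since
`C(m,k) C(m-k,t') = C(m,t') C(m-t',k)`, this is `C(m,t')` times the alternating row sum
`∑ₖ (-1)^k C(m-t',k)`, which vanishes unless `t' = m`. -/

/-- Binomial coefficient C(a,b) for integer arguments, with the convention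
    C(a,b) = 0 when b < 0 or b > a. -/
def intChoose (a b : ℤ) : ℤ :=
  if 0 ≤ b ∧ b ≤ a then (a.toNat.choose b.toNat : ℤ) else 0

open Finset

lemma intChoose_natCast (a b : ℕ) : intChoose a b = a.choose b := by
  unfold intChoose
  split_ifs with h
  · simp
  · rw [Nat.choose_eq_zero_of_lt (by omega), Nat.cast_zero]

lemma intChoose_of_neg (a : ℤ) {b : ℤ} (hb : b < 0) : intChoose a b = 0 :=
  if_neg (by omega)

lemma Nat.choose_mul_choose_sub_comm (m k j : ℕ) :
    m.choose k * (m - k).choose j = m.choose j * (m - j).choose k := by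
  -- both sides equal `C(m, k + j) C(k + j, k)`
  have hk := Nat.choose_mul (n := m) (Nat.le_add_right k j)
  have hj := Nat.choose_mul (n := m) (Nat.le_add_left j k)
  rw [Nat.add_sub_cancel_left] at hk
  rw [Nat.add_sub_cancel] at hj
  rw [← hk, ← hj, Nat.choose_symm_add]

lemma Int.alternating_sum_range_choose_mul_choose_sub (m j : ℕ) :
    ∑ k ∈ Finset.range (m + 1), (-1 : ℤ) ^ k * m.choose k * (m - k).choose j =
      if j = m then 1 else 0 := by
  have hswap : ∀ k, (-1 : ℤ) ^ k * m.choose k * (m - k).choose j =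
      m.choose j * ((-1) ^ k * (m - j).choose k) := fun k => by
    rw [mul_assoc, ← Nat.cast_mul, Nat.choose_mul_choose_sub_comm, Nat.cast_mul]
    ring
  simp_rw [hswap, ← mul_sum]
  rcases le_or_gt j m with hjm | hmj
  · obtain ⟨d, rfl⟩ := Nat.exists_eq_add_of_le hjm
    have hvanish : ∀ k ∈ Finset.range (j + d + 1), k ∉ Finset.range (d + 1) →
        (-1 : ℤ) ^ k * (d.choose k : ℤ) = 0 := fun k _ hk => by
      rw [Nat.choose_eq_zero_of_lt (by simpa using hk), Nat.cast_zero, mul_zero]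
    rw [Nat.add_sub_cancel_left, ← sum_subset (by simp) hvanish,
      Int.alternating_sum_range_choose]
    by_cases hd : d = 0 <;> simp [hd]
  · rw [Nat.choose_eq_zero_of_lt hmj, if_neg hmj.ne', Nat.cast_zero, zero_mul]

lemma alternating_sum_intChoose_sub_mul_intChoose (T m : ℕ) (j : ℤ) :
    ∑ s ∈ range (T + m + 1), (-1 : ℤ) ^ s * intChoose m (s - T) * intChoose ((T + m : ℕ) - s) j =
      (-1) ^ T * if j = m then 1 else 0 := by
  rcases lt_or_ge j 0 with hj | hj
  · rw [if_neg (by omega), mul_zero]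
    exact sum_eq_zero fun s _ => by rw [intChoose_of_neg _ hj, mul_zero]
  lift j to ℕ using hj
  have hbelow : ∑ s ∈ range T,
      (-1 : ℤ) ^ s * intChoose m (s - T) * intChoose ((T + m : ℕ) - s) j = 0 :=
    sum_eq_zero fun s hs => by
      rw [intChoose_of_neg _ (by simp at hs; omega), mul_zero, zero_mul]
  have hshift : ∀ k ∈ range (m + 1),
      (-1 : ℤ) ^ (T + k) * intChoose m ((T + k : ℕ) - T) * intChoose ((T + m : ℕ) - (T + k : ℕ)) j
        = (-1) ^ T * ((-1) ^ k * m.choose k * (m - k).choose j) := fun k hk => by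
    have hkm : k ≤ m := Nat.lt_succ_iff.mp (mem_range.mp hk)
    rw [show ((T + k : ℕ) : ℤ) - T = k by push_cast; ring,
      show ((T + m : ℕ) : ℤ) - (T + k : ℕ) = (m - k : ℕ) by push_cast [hkm]; ring,
      intChoose_natCast, intChoose_natCast, pow_add]
    ring
  rw [add_assoc, sum_range_add, hbelow, zero_add, sum_congr rfl hshift, ← mul_sum,
    Int.alternating_sum_range_choose_mul_choose_sub]
  simp only [Nat.cast_inj]

theorem binomial_sum_lemma_two_general (n : ℕ) (t : ℤ) (ht1 : -1 ≤ t)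
    (ht2 : t ≤ (n : ℤ) - 1) (t' : ℤ) :
    ∑ s ∈ Finset.range (n + 1),
        (-1 : ℤ) ^ s * intChoose ((n : ℤ) - t - 1) ((s : ℤ) - t - 1) * intChoose ((n : ℤ) - s) t'
      = (-1 : ℤ) ^ (t + 1).toNat * (if t' = (n : ℤ) - t - 1 then 1 else 0) := by
  obtain ⟨T, rfl⟩ : ∃ T : ℕ, t = T - 1 := ⟨(t + 1).toNat, by omega⟩
  obtain ⟨m, rfl⟩ : ∃ m : ℕ, n = T + m := ⟨n - T, by omega⟩
  have hindex : ∀ s : ℕ, (s : ℤ) - (T - 1) - 1 = s - T := fun s => by ring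
  have htop : ((T + m : ℕ) : ℤ) - T = m := by push_cast; ring
  simp only [hindex, htop, sub_add_cancel, Int.toNat_natCast]
  exact alternating_sum_intChoose_sub_mul_intChoose T m t'

/-- ∑_{s=0}^{n} (-1)^s C(n-t-1, s-t-1) C(n-s, t') = (-1)^{t+1} δ_{t', n-t-1},
    for n ≥ 1, -1 ≤ t ≤ n-1 and any integer t'. -/
theorem binomial_sum_lemma_two (n : ℕ) (hn : 1 ≤ n) (t : ℤ) (ht1 : -1 ≤ t)
    (ht2 : t ≤ (n : ℤ) - 1) (t' : ℤ) :
    ∑ s ∈ Finset.range (n + 1),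
        (-1 : ℤ) ^ s * intChoose ((n : ℤ) - t - 1) ((s : ℤ) - t - 1) * intChoose ((n : ℤ) - s) t'
      = (-1 : ℤ) ^ (t + 1).toNat * (if t' = (n : ℤ) - t - 1 then 1 else 0) :=
  binomial_sum_lemma_two_general n t ht1 ht2 t'
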